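/- Let k ≥ 0 and let V_k = {(x,y) ∈ ℤ² : 0 ≤ x ≤ 8·2^k − 4, y ∈ {0,1}}, with n = 16·2^k − 6 points. Let G be the simple graph on V_k whose edges join pairs of points at rectilinear distance 1, and let d be the shortest-path (graph) metric of G. Then there exists an enumeration x₀, x₁, …, x_{n−1} of all points of V_k with x₀ = (0,0) and x_{n−1} = (4·2^k − 2, 1) such that for every i < n−1 and every point y ∈ V_k not among x₀,…,x_i one has d(x_i, x_{i+1}) ≤ d(x_i, y), and Σ_{i<n−1} d(x_i, x_{i+1}) = (12 + 4k)·2^k − 3. -/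

import Mathlib

/-!
The tour is built by doubling. `tour j` sweeps the two rows over the columns `0, …, 4·2^j − 4`
and ends in the middle column `2·2^j − 2`. The next level runs through it, jumps right to a gap of
three columns, crosses the gap along the bottom row, runs through a translated copy, and jumps back
into the gap along the top row. The invariant carried through the induction is that every step is
a nearest-neighbour step even against all points outside the current strip: an endpoint in the
middle column is at distance exactly `2·2^j − 1`, the length of each jump, from both columns
adjacent to the strip. On the two-row grid the graph distance is the taxicab distance, because
between two distinct points there is always a unit step that shortens it.
-/

theorem List.mem_map_add_right_iff {G : Type*} [AddGroup G] {l : List G} {v y : G} :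
    y ∈ l.map (· + v) ↔ y - v ∈ l := by
  refine ⟨fun h => ?_, fun h => List.mem_map.2 ⟨y - v, h, sub_add_cancel y v⟩⟩
  obtain ⟨x, hx, rfl⟩ := List.mem_map.1 h
  simpa using hx

section NNPath

variable {α : Type*} (δ : α → α → ℤ)

/-- Every step goes to a nearest point among the points not yet visited and the extra points `E`. -/
def IsNNPath (E : Set α) : List α → Prop
  | a :: b :: l => (∀ y, y ∈ b :: l ∨ y ∈ E → δ a b ≤ δ a y) ∧ IsNNPath E (b :: l)
  | _ => True

def pathLength : List α → ℤ
  | a :: b :: l => δ a b + pathLength (b :: l)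
  | _ => 0

variable {δ}

theorem IsNNPath.mono {E E' : Set α} (h : E ⊆ E') :
    ∀ {l : List α}, IsNNPath δ E' l → IsNNPath δ E l
  | [] | [_] => fun _ => trivial
  | _ :: _ :: _ => fun ⟨hstep, hrest⟩ =>
      ⟨fun y hy => hstep y (hy.imp_right (@h y)), hrest.mono h⟩

theorem IsNNPath.append {E : Set α} {a b : α} :
    ∀ {l₁ l₂ : List α}, IsNNPath δ (E ∪ {y | y ∈ l₂}) l₁ → IsNNPath δ E l₂ →
      l₁.getLast? = some a → l₂.head? = some b → (∀ y, y ∈ l₂ ∨ y ∈ E → δ a b ≤ δ a y) →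
      IsNNPath δ E (l₁ ++ l₂)
  | [], _, _, _, ha, _, _ => by simp at ha
  | [_], _ :: _, _, h₂, ha, hb, hab => by
      simp only [List.getLast?_singleton, List.head?_cons, Option.some.injEq] at ha hb
      subst ha hb
      exact ⟨hab, h₂⟩
  | c :: c' :: l₁, l₂, ⟨hstep, hrest⟩, h₂, ha, hb, hab => by
      refine ⟨fun y hy => hstep y ?_, hrest.append h₂ (by simpa using ha) hb hab⟩
      simp only [List.append_eq, List.mem_cons, List.mem_append, Set.mem_union,
        Set.mem_ofPred_eq] at hy ⊢
      tauto

theorem IsNNPath.map {E : Set α} {f : α → α} (hf : ∀ a b, δ (f a) (f b) = δ a b) :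
    ∀ {l : List α}, IsNNPath δ E l → IsNNPath δ (f '' E) (l.map f)
  | [] | [_] => fun _ => trivial
  | a :: b :: l => fun ⟨hstep, hrest⟩ => by
      refine ⟨?_, hrest.map hf⟩
      rintro y (hy | ⟨z, hz, rfl⟩)
      · obtain ⟨z, hz, rfl⟩ := (List.mem_map (l := b :: l)).1 hy
        rw [hf, hf]
        exact hstep z (Or.inl hz)
      · rw [hf, hf]
        exact hstep z (Or.inr hz)

theorem IsNNPath.of_isChain {E : Set α} (hδ : ∀ a b, a ≠ b → 1 ≤ δ a b) :
    ∀ {l : List α}, l.IsChain (fun a b => δ a b = 1) → l.Nodup → (∀ a ∈ l, a ∉ E) →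
      IsNNPath δ E l
  | [] | [_] => fun _ _ _ => trivial
  | a :: b :: l => fun hc hnd hE => by
      rw [List.isChain_cons_cons] at hc
      refine ⟨fun y hy => hc.1 ▸ hδ a y ?_,
        of_isChain hδ hc.2 hnd.of_cons fun x hx => hE x (List.mem_cons_of_mem _ hx)⟩
      rintro rfl
      rcases hy with hy | hy
      · exact (List.nodup_cons.1 hnd).1 hy
      · exact hE a List.mem_cons_self hy

theorem IsNNPath.le_of_mem_drop {E : Set α} :
    ∀ {l : List α}, IsNNPath δ E l → ∀ {i : ℕ} (hi : i + 1 < l.length) {y : α},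
      y ∈ l.drop (i + 1) → δ l[i] l[i + 1] ≤ δ l[i] y
  | [], _, _, hi, _, _ | [_], _, _, hi, _, _ => by simp at hi
  | _ :: _ :: _, ⟨hstep, _⟩, 0, _, y, hy => hstep y (Or.inl hy)
  | _ :: b :: l, ⟨_, hrest⟩, i + 1, hi, y, hy =>
      hrest.le_of_mem_drop (l := b :: l) (by simpa using hi) hy

theorem pathLength_append {a b : α} :
    ∀ {l₁ l₂ : List α}, l₁.getLast? = some a → l₂.head? = some b →
      pathLength δ (l₁ ++ l₂) = pathLength δ l₁ + δ a b + pathLength δ l₂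
  | [], _, ha, _ => by simp at ha
  | [_], _ :: _, ha, hb => by
      simp only [List.getLast?_singleton, List.head?_cons, Option.some.injEq] at ha hb
      subst ha hb
      simp [pathLength]
  | c :: c' :: l₁, l₂, ha, hb => by
      have := pathLength_append (l₁ := c' :: l₁) (by simpa using ha) hb
      simp only [List.cons_append, pathLength] at this ⊢
      rw [this]; ring

theorem pathLength_map {f : α → α} (hf : ∀ a b, δ (f a) (f b) = δ a b) :
    ∀ l : List α, pathLength δ (l.map f) = pathLength δ l
  | [] | [_] => rfl
  | a :: b :: l => by
      rw [List.map_cons, List.map_cons, pathLength, hf, ← List.map_cons, pathLength_map hf,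
        pathLength]

theorem pathLength_eq_sum_getD (z : α) : ∀ l : List α,
    pathLength δ l = ∑ i ∈ Finset.range (l.length - 1), δ (l.getD i z) (l.getD (i + 1) z)
  | [] | [_] => by simp [pathLength]
  | a :: b :: l => by
      simp only [pathLength, pathLength_eq_sum_getD z (b :: l), List.length_cons,
        Nat.add_sub_cancel, Finset.sum_range_succ', List.getD_cons_succ, List.getD_cons_zero]
      exact add_comm _ _

theorem IsNNPath.exists_enumeration {V : Set α} {l : List α} (hnn : IsNNPath δ ∅ l)
    (hnd : l.Nodup) (hV : ∀ p, p ∈ V ↔ p ∈ l) {z : α} (hz : z ∈ V) :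
    ∃ x : ℕ → V,
      (∀ i < l.length, ∀ j < l.length, x i = x j → i = j) ∧
      (∀ p : V, ∃ i < l.length, x i = p) ∧
      l.head? = some ↑(x 0) ∧ l.getLast? = some ↑(x (l.length - 1)) ∧
      (∀ i < l.length - 1, ∀ y : V, (∀ j ≤ i, x j ≠ y) → δ (x i) (x (i + 1)) ≤ δ (x i) y) ∧
      ∑ i ∈ Finset.range (l.length - 1), δ (x i) (x (i + 1)) = pathLength δ l := by
  have hmem (i : ℕ) : l.getD i z ∈ V := by
    rw [List.getD_eq_getElem?_getD]
    cases h : l[i]? with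
    | none => exact hz
    | some a => exact (hV a).2 (List.mem_of_getElem? h)
  have hget {i : ℕ} (hi : i < l.length) : l.getD i z = l[i] := List.getD_eq_getElem _ _ hi
  have hlen : 0 < l.length := List.length_pos_of_mem ((hV z).1 hz)
  refine ⟨fun i => ⟨l.getD i z, hmem i⟩, fun i hi j hj hij => ?_, fun p => ?_, ?_, ?_,
    fun i hi y hy => ?_, (pathLength_eq_sum_getD z l).symm⟩
  · have hij : l.getD i z = l.getD j z := congrArg Subtype.val hij
    rwa [hget hi, hget hj, hnd.getElem_inj_iff] at hij
  · obtain ⟨i, hi, hp⟩ := List.mem_iff_getElem.1 ((hV p).1 p.2)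
    exact ⟨i, hi, Subtype.ext ((hget hi).trans hp)⟩
  · rw [List.head?_eq_getElem?, List.getElem?_eq_getElem hlen, ← hget hlen]
  · rw [List.getLast?_eq_getElem?, List.getElem?_eq_getElem (by omega), ← hget (by omega)]
  · obtain ⟨j, hj, hjy⟩ := List.mem_iff_getElem.1 ((hV y).1 y.2)
    have hij : i < j := by
      by_contra! hji
      exact hy j hji (Subtype.ext ((hget hj).trans hjy))
    have hy_drop : (y : α) ∈ l.drop (i + 1) :=
      List.mem_drop_iff_getElem.2
        ⟨j - (i + 1), by omega, by simpa [show i + 1 + (j - (i + 1)) = j by omega]⟩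
    simpa only [hget (show i < l.length by omega), hget (show i + 1 < l.length by omega)] using
      hnn.le_of_mem_drop (by omega) hy_drop

end NNPath

def taxicabDist (p q : ℤ × ℤ) : ℤ := |p.1 - q.1| + |p.2 - q.2|

theorem taxicabDist_eq_natAbs (p q : ℤ × ℤ) :
    taxicabDist p q = (p.1 - q.1).natAbs + (p.2 - q.2).natAbs := by
  simp only [taxicabDist, Int.abs_eq_natAbs]

theorem taxicabDist_add_right (p q v : ℤ × ℤ) : taxicabDist (p + v) (q + v) = taxicabDist p q := by
  simp only [taxicabDist, Prod.fst_add, Prod.snd_add, add_sub_add_right_eq_sub]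

theorem taxicabDist_self (p : ℤ × ℤ) : taxicabDist p p = 0 := by
  simp [taxicabDist]

theorem one_le_taxicabDist {p q : ℤ × ℤ} (h : p ≠ q) : 1 ≤ taxicabDist p q := by
  rw [taxicabDist_eq_natAbs]
  have : p.1 ≠ q.1 ∨ p.2 ≠ q.2 := by
    by_contra! hc
    exact h (Prod.ext hc.1 hc.2)
  omega

def IsTaxicabGeodesic (V : Set (ℤ × ℤ)) : Prop :=
  ∀ p ∈ V, ∀ q ∈ V, p ≠ q → ∃ r ∈ V, taxicabDist p r = 1 ∧ taxicabDist r q + 1 = taxicabDist p q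

theorem isTaxicabGeodesic_Icc_prod_Icc (a b c e : ℤ) :
    IsTaxicabGeodesic (Set.Icc a b ×ˢ Set.Icc c e) := by
  rintro ⟨p₁, p₂⟩ ⟨⟨hp₁, hp₁'⟩, hp₂, hp₂'⟩ ⟨q₁, q₂⟩ ⟨⟨hq₁, hq₁'⟩, hq₂, hq₂'⟩ hpq
  simp only [Set.mem_prod, Set.mem_Icc, taxicabDist_eq_natAbs, Prod.exists] at *
  rcases lt_trichotomy p₁ q₁ with h | rfl | h
  · exact ⟨p₁ + 1, p₂, by omega⟩
  · have : p₂ ≠ q₂ := fun h => hpq (by rw [h])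
    rcases this.lt_or_gt with h | h
    · exact ⟨p₁, p₂ + 1, by omega⟩
    · exact ⟨p₁, p₂ - 1, by omega⟩
  · exact ⟨p₁ - 1, p₂, by omega⟩

section GridGraph

variable {V : Set (ℤ × ℤ)} {G : SimpleGraph V}

theorem taxicabDist_le_length (hG : ∀ p q : V, G.Adj p q ↔ taxicabDist p q = 1) {p q : V}
    (w : G.Walk p q) : taxicabDist p q ≤ w.length := by
  induction w with
  | nil => simp [taxicabDist]
  | @cons u v x hadj w ih =>
    have huv := (hG u v).1 hadj
    rw [SimpleGraph.Walk.length_cons, Nat.cast_succ]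
    simp only [taxicabDist_eq_natAbs] at huv ih ⊢
    omega

theorem exists_walk_length_eq_taxicabDist (hgeo : IsTaxicabGeodesic V)
    (hG : ∀ p q : V, G.Adj p q ↔ taxicabDist p q = 1) :
    ∀ (n : ℕ) (p q : V), taxicabDist p q = n → ∃ w : G.Walk p q, w.length = n := by
  intro n
  induction n with
  | zero =>
    intro p q hpq
    obtain rfl : p = q := by
      by_contra h
      have := one_le_taxicabDist (Subtype.coe_ne_coe.2 h)
      omega
    exact ⟨.nil, rfl⟩
  | succ n ih =>
    intro p q hpq
    have hne : (p : ℤ × ℤ) ≠ q := by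
      rintro h
      rw [h, taxicabDist_self] at hpq
      omega
    obtain ⟨r, hrV, hpr, hrq⟩ := hgeo p p.2 q q.2 hne
    obtain ⟨w, hw⟩ := ih ⟨r, hrV⟩ q (show taxicabDist r q = n by push_cast at hpq; omega)
    exact ⟨.cons ((hG p ⟨r, hrV⟩).2 hpr) w, by simp [hw]⟩

theorem dist_eq_taxicabDist (hgeo : IsTaxicabGeodesic V)
    (hG : ∀ p q : V, G.Adj p q ↔ taxicabDist p q = 1) (p q : V) :
    (G.dist p q : ℤ) = taxicabDist p q := by
  have hnonneg : 0 ≤ taxicabDist p q := by rw [taxicabDist_eq_natAbs]; omega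
  obtain ⟨w, hw⟩ := exists_walk_length_eq_taxicabDist hgeo hG (taxicabDist p q).toNat p q
    (Int.toNat_of_nonneg hnonneg).symm
  obtain ⟨w', hw'⟩ := w.reachable.exists_walk_length_eq_dist
  have hle := SimpleGraph.dist_le w
  have hge := taxicabDist_le_length hG w'
  omega

end GridGraph

def tourBridge (w : ℤ) : List (ℤ × ℤ) := [(w - 3, 1), (w - 3, 0), (w - 2, 0), (w - 1, 0)]

def tourReturn (w : ℤ) : List (ℤ × ℤ) := [(w - 1, 1), (w - 2, 1)]

def tour : ℕ → List (ℤ × ℤ)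
  | 0 => [(0, 0), (0, 1)]
  | j + 1 => tour j ++ (tourBridge (4 * 2 ^ j) ++
      ((tour j).map (· + (4 * 2 ^ j, 0)) ++ tourReturn (4 * 2 ^ j)))

theorem length_tour (j : ℕ) : (tour j).length = 8 * 2 ^ j - 6 := by
  induction j with
  | zero => rfl
  | succ j ih =>
    have hpow : 1 ≤ 2 ^ j := Nat.one_le_two_pow
    simp only [tour, tourBridge, tourReturn, List.length_append, List.length_map, ih,
      List.length_cons, List.length_nil, pow_succ]
    omega

theorem mem_tour_iff {j : ℕ} {p : ℤ × ℤ} :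
    p ∈ tour j ↔ 0 ≤ p.1 ∧ p.1 ≤ 4 * 2 ^ j - 4 ∧ (p.2 = 0 ∨ p.2 = 1) := by
  induction j generalizing p with
  | zero =>
    simp only [tour, List.mem_cons, List.not_mem_nil, or_false, Prod.ext_iff, pow_zero]
    omega
  | succ j ih =>
    simp only [tour, tourBridge, tourReturn, List.mem_append, List.mem_cons, List.not_mem_nil,
      or_false, List.mem_map_add_right_iff, ih, Prod.ext_iff, Prod.fst_sub, Prod.snd_sub,
      pow_succ]
    have hpow : (1 : ℤ) ≤ 2 ^ j := one_le_pow₀ one_le_two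
    omega

theorem nodup_tourBridge (w : ℤ) : (tourBridge w).Nodup := by
  simp only [tourBridge, List.nodup_cons, List.mem_cons, List.not_mem_nil, Prod.ext_iff,
    List.nodup_nil, and_true, or_false, not_false_eq_true]
  omega

theorem nodup_tourReturn (w : ℤ) : (tourReturn w).Nodup := by
  simp only [tourReturn, List.nodup_cons, List.mem_cons, List.not_mem_nil, Prod.ext_iff,
    List.nodup_nil, and_true, or_false, not_false_eq_true]
  omega

theorem isChain_tourBridge (w : ℤ) :
    (tourBridge w).IsChain (fun a b => taxicabDist a b = 1) := by
  simp only [tourBridge, List.isChain_cons_cons, List.isChain_singleton, taxicabDist_eq_natAbs,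
    and_true]
  omega

theorem isChain_tourReturn (w : ℤ) :
    (tourReturn w).IsChain (fun a b => taxicabDist a b = 1) := by
  simp only [tourReturn, List.isChain_cons_cons, List.isChain_singleton, taxicabDist_eq_natAbs,
    and_true]
  omega

theorem nodup_tour (j : ℕ) : (tour j).Nodup := by
  induction j with
  | zero => decide
  | succ j ih =>
    rw [tour, List.nodup_append, List.nodup_append, List.nodup_append]
    refine ⟨ih, ⟨nodup_tourBridge _, ⟨ih.map (add_left_injective _), nodup_tourReturn _, ?_⟩, ?_⟩,
      ?_⟩ <;>
    · rintro a ha b hb rfl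
      simp only [tourBridge, tourReturn, List.mem_cons, List.not_mem_nil, List.mem_append,
        List.mem_map_add_right_iff, mem_tour_iff, Prod.ext_iff, Prod.fst_sub, Prod.snd_sub,
        or_false] at ha hb
      omega

theorem head?_tour (j : ℕ) : (tour j).head? = some (0, 0) := by
  induction j with
  | zero => rfl
  | succ j ih => rw [tour, List.head?_append, ih, Option.some_or]

theorem getLast?_tour (j : ℕ) : (tour j).getLast? = some (2 * 2 ^ j - 2, 1) := by
  induction j with
  | zero => rfl
  | succ j ih =>
    simp only [tour, tourReturn, List.getLast?_append, List.getLast?_cons_cons,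
      List.getLast?_singleton, Option.some_or, pow_succ]
    congr 2
    ring

theorem head?_map_add_tour (j : ℕ) (v : ℤ × ℤ) : ((tour j).map (· + v)).head? = some v := by
  simp [List.head?_map, head?_tour]

theorem getLast?_map_add_tour (j : ℕ) (v : ℤ × ℤ) :
    ((tour j).map (· + v)).getLast? = some ((2 * 2 ^ j - 2, 1) + v) := by
  simp [List.getLast?_map, getLast?_tour]

theorem pathLength_tour (j : ℕ) :
    pathLength taxicabDist (tour j) = (j + 2) * 2 ^ (j + 1) - 3 := by
  induction j with
  | zero => rfl
  | succ j ih =>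
    rw [tour, pathLength_append (getLast?_tour j) rfl,
      pathLength_append (a := (4 * 2 ^ j - 1, 0)) rfl
        (by rw [List.head?_append, head?_map_add_tour, Option.some_or]),
      pathLength_append (getLast?_map_add_tour j _) rfl,
      pathLength_map (taxicabDist_add_right · · _), ih]
    push_cast
    simp only [pathLength, tourBridge, tourReturn, taxicabDist_eq_natAbs, Prod.mk_add_mk]
    have hpow : (1 : ℤ) ≤ 2 ^ j := one_le_pow₀ one_le_two
    ring_nf
    omega

theorem isNNPath_map_add_append_tourReturn {j : ℕ}
    (ih : IsNNPath taxicabDist {y | y.1 < 0 ∨ 4 * 2 ^ j - 4 < y.1} (tour j)) :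
    IsNNPath taxicabDist {y | y.1 < 0 ∨ 4 * 2 ^ (j + 1) - 4 < y.1}
      ((tour j).map (· + (4 * 2 ^ j, 0)) ++ tourReturn (4 * 2 ^ j)) := by
  have hpow : (1 : ℤ) ≤ 2 ^ j := one_le_pow₀ one_le_two
  refine ((ih.map (taxicabDist_add_right · · _)).mono ?_).append
    (.of_isChain (fun _ _ => one_le_taxicabDist) (isChain_tourReturn _) (nodup_tourReturn _) ?_)
    (getLast?_map_add_tour j _) rfl ?_
  · intro y hy
    rw [Set.image_add_right]
    simp only [tourReturn, Set.mem_union, Set.mem_ofPred_eq, List.mem_cons, List.not_mem_nil,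
      or_false, Set.mem_preimage, Prod.fst_add, Prod.fst_neg, Prod.ext_iff] at hy ⊢
    omega
  · intro a ha
    simp only [tourReturn, Set.mem_ofPred_eq, List.mem_cons, List.not_mem_nil,
      or_false, Prod.ext_iff] at ha ⊢
    omega
  · intro y hy
    simp only [tourReturn, Set.mem_ofPred_eq, List.mem_cons, List.not_mem_nil,
      or_false, Prod.ext_iff, taxicabDist_eq_natAbs, Prod.mk_add_mk] at hy ⊢
    omega

theorem isNNPath_tourBridge_append {j : ℕ}
    (h : IsNNPath taxicabDist {y | y.1 < 0 ∨ 4 * 2 ^ (j + 1) - 4 < y.1}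
      ((tour j).map (· + (4 * 2 ^ j, 0)) ++ tourReturn (4 * 2 ^ j))) :
    IsNNPath taxicabDist {y | y.1 < 0 ∨ 4 * 2 ^ (j + 1) - 4 < y.1}
      (tourBridge (4 * 2 ^ j) ++
        ((tour j).map (· + (4 * 2 ^ j, 0)) ++ tourReturn (4 * 2 ^ j))) := by
  set l := (tour j).map (· + (4 * 2 ^ j, 0)) ++ tourReturn (4 * 2 ^ j) with hl
  have hpow : (1 : ℤ) ≤ 2 ^ j := one_le_pow₀ one_le_two
  have hl_mem : ∀ y ∈ l, 4 * 2 ^ j ≤ y.1 ∨ 4 * 2 ^ j - 2 ≤ y.1 ∧ y.2 = 1 := by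
    intro y hy
    simp only [hl, tourReturn, List.mem_append, List.mem_map_add_right_iff, mem_tour_iff,
      List.mem_cons, List.not_mem_nil, or_false, Prod.fst_sub, Prod.ext_iff] at hy
    omega
  refine (IsNNPath.of_isChain (fun _ _ => one_le_taxicabDist) (isChain_tourBridge _)
    (nodup_tourBridge _) ?_).append h (a := (4 * 2 ^ j - 1, 0)) rfl
    (by rw [hl, List.head?_append, head?_map_add_tour, Option.some_or]) ?_
  · intro a ha haE
    simp only [tourBridge, List.mem_cons, List.not_mem_nil, or_false, Prod.ext_iff] at ha
    rcases haE with haE | hal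
    · simp only [Set.mem_ofPred_eq] at haE
      omega
    · have hrange := hl_mem a hal
      omega
  · intro y hy
    simp only [taxicabDist_eq_natAbs]
    rcases hy with hyl | hyE
    · have hrange := hl_mem y hyl
      omega
    · simp only [Set.mem_ofPred_eq] at hyE
      omega

theorem isNNPath_tour (j : ℕ) :
    IsNNPath taxicabDist {y | y.1 < 0 ∨ 4 * 2 ^ j - 4 < y.1} (tour j) := by
  induction j with
  | zero =>
    refine .of_isChain (fun _ _ => one_le_taxicabDist) ?_ (by decide) ?_ <;>
      simp [tour, taxicabDist]
  | succ j ih =>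
    have hpow : (1 : ℤ) ≤ 2 ^ j := one_le_pow₀ one_le_two
    set l := tourBridge (4 * 2 ^ j) ++
      ((tour j).map (· + (4 * 2 ^ j, 0)) ++ tourReturn (4 * 2 ^ j)) with hl
    have hl_mem : ∀ y ∈ l, 4 * 2 ^ j - 3 ≤ y.1 := by
      intro y hy
      simp only [hl, tourBridge, tourReturn, List.mem_append, List.mem_map_add_right_iff,
        mem_tour_iff, List.mem_cons, List.not_mem_nil, or_false, Prod.fst_sub, Prod.ext_iff] at hy
      omega
    refine (ih.mono ?_).append (isNNPath_tourBridge_append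
      (isNNPath_map_add_append_tourReturn ih)) (getLast?_tour j) rfl ?_
    · rintro y (hyE | hyl)
      · simp only [Set.mem_ofPred_eq] at hyE ⊢
        omega
      · have hrange := hl_mem y hyl
        simp only [Set.mem_ofPred_eq]
        omega
    · intro y hy
      simp only [taxicabDist_eq_natAbs]
      rcases hy with hyl | hyE
      · have hrange := hl_mem y hyl
        omega
      · simp only [Set.mem_ofPred_eq] at hyE
        omega

/-- On the `2 × (8·2^k − 3)` grid `V_k` with the shortest-path metric of the
grid graph (edges between points at rectilinear distance 1), there is a partial
nearest-neighbor tour through all of `V_k` starting at `(0,0)`, ending at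
`(4·2^k − 2, 1)`, of total length `(12 + 4k)·2^k − 3`. -/
theorem nnr_partial_tour_graphic (k : ℕ) (n : ℕ) (hn : n = 16 * 2 ^ k - 6)
    (V : Set (ℤ × ℤ))
    (hV : V = {p : ℤ × ℤ | 0 ≤ p.1 ∧ p.1 ≤ 8 * 2 ^ k - 4 ∧ (p.2 = 0 ∨ p.2 = 1)})
    (G : SimpleGraph V)
    (hG : ∀ p q : V, G.Adj p q ↔
      |(p : ℤ × ℤ).1 - (q : ℤ × ℤ).1| + |(p : ℤ × ℤ).2 - (q : ℤ × ℤ).2| = 1)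
    (d : V → V → ℕ) (hd : ∀ p q : V, d p q = G.dist p q) :
    ∃ x : ℕ → V,
      (∀ i < n, ∀ j < n, x i = x j → i = j) ∧
      (∀ p : V, ∃ i < n, x i = p) ∧
      (x 0 : ℤ × ℤ) = (0, 0) ∧
      (x (n - 1) : ℤ × ℤ) = (4 * 2 ^ k - 2, 1) ∧
      (∀ i < n - 1, ∀ y : V, (∀ j ≤ i, x j ≠ y) →
        d (x i) (x (i + 1)) ≤ d (x i) y) ∧
      ∑ i ∈ Finset.range (n - 1), d (x i) (x (i + 1))
        = (12 + 4 * k) * 2 ^ k - 3 := by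
  have hpow : 1 ≤ 2 ^ k := Nat.one_le_two_pow
  have hpow_succ := pow_succ (2 : ℤ) k
  have hV_tour (p : ℤ × ℤ) : p ∈ V ↔ p ∈ tour (k + 1) := by
    rw [hV, mem_tour_iff, Set.mem_ofPred_eq]
    omega
  have hV_box : V = Set.Icc 0 (8 * 2 ^ k - 4) ×ˢ Set.Icc 0 1 := by
    ext p
    rw [hV, Set.mem_ofPred_eq, Set.mem_prod, Set.mem_Icc, Set.mem_Icc]
    omega
  have hdist (p q : V) : (d p q : ℤ) = taxicabDist p q := by
    rw [hd, dist_eq_taxicabDist (hV_box ▸ isTaxicabGeodesic_Icc_prod_Icc _ _ _ _) hG]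
  have hlen : (tour (k + 1)).length = n := by
    rw [length_tour, hn, pow_succ]
    omega
  obtain ⟨x, hinj, hsurj, hhead, hlast, hnn, hsum⟩ :=
    ((isNNPath_tour (k + 1)).mono (Set.empty_subset _)).exists_enumeration (nodup_tour _) hV_tour
      ((hV_tour _).2 (List.mem_of_mem_head? (head?_tour _)))
  rw [hlen] at hinj hsurj hlast hnn hsum
  refine ⟨x, hinj, hsurj, ?_, ?_, fun i hi y hy => ?_, ?_⟩
  · rw [head?_tour] at hhead
    exact (Option.some.inj hhead).symm
  · rw [getLast?_tour, hpow_succ] at hlast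
    rw [← Option.some.inj hlast]
    congr 1
    ring
  · exact_mod_cast (hdist _ _).trans_le ((hnn i hi y hy).trans_eq (hdist _ _).symm)
  · zify [show 3 ≤ (12 + 4 * k) * 2 ^ k by nlinarith]
    simp only [hdist, hsum, pathLength_tour]
    push_cast
    ring
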